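/- arXiv:2402.18250 — 4 statements merged into one kernel-verified Lean document; each statement's English description precedes it below -/
import Mathlib

section
/- Let X be a set, and let λ and μ be cardinals. Suppose that for each α < μ, F_α ⊆ 2^X is a family of functions X → 2, and let F = ⋃_{α<μ} F_α. If F shatters a set A ⊆ X of cardinality μ·λ (i.e., every function A → 2 is a restriction of some element of F), then there exists α < μ such that F_α shatters some subset of X of cardinality λ. -/
/-!
Split `A` into `μ` pieces of cardinality `λ`, one for each family. If no family `F_α` shattered
its own piece, pick for each `α` a pattern on the `α`-th piece that `F_α` misses; gluing these
patterns gives a pattern on `A` that no member of the union realizes.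
-/

universe u

open Cardinal

/-- `F` shatters `A` if every function `A → Bool` extends to an element of `F`. -/
def Shatters {X : Type u} (F : Set (X → Bool)) (A : Set X) : Prop :=
  ∀ g : X → Bool, ∃ f ∈ F, ∀ a ∈ A, f a = g a

theorem Shatters.exists_shatters_inter_fiber {X : Type u} {ι : Type*} {F : ι → Set (X → Bool)}
    {A : Set X} (h : Shatters (⋃ i, F i) A) (p : X → ι) :
    ∃ i, Shatters (F i) (A ∩ p ⁻¹' {i}) := by
  by_contra! hF
  simp only [Shatters, not_forall, not_exists, not_and] at hF
  choose g hg using hF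
  obtain ⟨f, hf, hfg⟩ := h fun x => g (p x) x
  obtain ⟨i, hfi⟩ := Set.mem_iUnion.mp hf
  obtain ⟨a, ⟨haA, rfl⟩, hfa⟩ := hg i f hfi
  exact hfa (hfg a haA)

theorem Set.exists_mk_inter_fiber_eq {X ι : Type u} [Nonempty ι] {A : Set X}
    {κ : Cardinal.{u}} (hA : #A = #ι * κ) : ∃ p : X → ι, ∀ i, #(A ∩ p ⁻¹' {i} : Set X) = κ := by
  classical
  obtain ⟨e⟩ : Nonempty (A ≃ ι × κ.out) := Cardinal.eq.mp (by simpa using hA)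
  let p : X → ι := fun x => if hx : x ∈ A then (e ⟨x, hx⟩).1 else Classical.arbitrary ι
  refine ⟨p, fun i => ?_⟩
  have hfiber : A ∩ p ⁻¹' {i} = Subtype.val '' (e.symm '' ({i} ×ˢ Set.univ)) := by
    ext x
    constructor
    · rintro ⟨hx, hpx⟩
      refine ⟨⟨x, hx⟩, ⟨e ⟨x, hx⟩, ?_, by simp⟩, rfl⟩
      simpa [p, hx] using hpx
    · rintro ⟨_, ⟨q, ⟨rfl, -⟩, rfl⟩, rfl⟩
      simp [p]
  rw [hfiber, mk_image_eq Subtype.val_injective, mk_image_eq e.symm.injective,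
    mk_congr (Equiv.Set.prod _ _), mk_prod]
  simp

/-- If a union of `μ` many families shatters a set of cardinality `μ * λ`, then one of
the families shatters a set of cardinality `λ`. -/
theorem stmt0 {X : Type u} (lam mu : Cardinal.{u}) (ι : Type u) (hι : #ι = mu)
    (Fam : ι → Set (X → Bool)) (A : Set X) (hA : #A = mu * lam)
    (h : Shatters (⋃ i, Fam i) A) :
    ∃ i, ∃ B : Set X, #B = lam ∧ Shatters (Fam i) B := by
  obtain ⟨f, hf, -⟩ := h fun _ => true
  obtain ⟨i₀, -⟩ := Set.mem_iUnion.mp hf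
  have : Nonempty ι := ⟨i₀⟩
  subst hι
  obtain ⟨p, hp⟩ := Set.exists_mk_inter_fiber_eq hA
  obtain ⟨i, hi⟩ := h.exists_shatters_inter_fiber p
  exact ⟨i, _, hp i, hi⟩
end

section
/- Let δ and κ be infinite cardinals. The collection S(δ,κ) = {F ⊆ 2^κ : sdim(F) < δ} is closed under unions of fewer than cf(δ) many members. That is, if μ < cf(δ) and F_α ∈ S(δ,κ) for all α < μ, then ⋃_{α<μ} F_α ∈ S(δ,κ). -/
universe u

open Cardinal

/-- The string dimension of `F`: the least cardinal `δ` such that `F` shatters no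
set of cardinality `δ`. -/
noncomputable def sdim {X : Type u} (F : Set (X → Bool)) : Cardinal.{u} :=
  sInf {δ : Cardinal.{u} | ∀ A : Set X, #A = δ → ¬ Shatters F A}

/-! Subadditivity of the string dimension: if `⋃ Fᵢ` shattered a set `A` of size `∑ sdim Fᵢ`,
split `A` into disjoint pieces `Aᵢ` of size `sdim Fᵢ`, pick for each `i` a pattern on `Aᵢ` that
`Fᵢ` misses, and glue these patterns; no member of the union realizes the glued pattern. Then
`∑ sdim Fᵢ ≤ #ι * sup sdim Fᵢ < δ`, because fewer than `cf δ` cardinals below `δ` have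
supremum below `δ`. -/

open Function

theorem Shatters.mono {X : Type u} {F : Set (X → Bool)} {A B : Set X} (h : Shatters F A)
    (hBA : B ⊆ A) : Shatters F B := fun g ↦
  let ⟨f, hf, hfg⟩ := h g
  ⟨f, hf, fun a ha ↦ hfg a (hBA ha)⟩

theorem exists_shatters_of_shatters_iUnion {X : Type u} {ι : Type*} {F : ι → Set (X → Bool)}
    {A : ι → Set X} (hA : Pairwise (Disjoint on A)) (h : Shatters (⋃ i, F i) (⋃ i, A i)) :
    ∃ i, Shatters (F i) (A i) := by
  classical
  by_contra! hno
  simp only [Shatters, not_forall, not_exists, not_and] at hno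
  choose g hg using hno
  let G : X → Bool := fun x ↦ if hx : ∃ i, x ∈ A i then g hx.choose x else false
  obtain ⟨f, hf, hfG⟩ := h G
  obtain ⟨i, hfi⟩ := Set.mem_iUnion.mp hf
  obtain ⟨a, ha, hfa⟩ := hg i f hfi
  have hex : ∃ j, a ∈ A j := ⟨i, ha⟩
  have hchoose : hex.choose = i := hA.eq (Set.not_disjoint_iff.mpr ⟨a, hex.choose_spec, ha⟩)
  apply hfa
  rw [hfG a (Set.mem_iUnion.mpr hex)]
  simp only [G, dif_pos hex, hchoose]

theorem Cardinal.exists_pairwiseDisjoint_subsets_of_sum_le {X ι : Type u} {c : ι → Cardinal.{u}}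
    {A : Set X} (hc : Cardinal.sum c ≤ #A) :
    ∃ B : ι → Set X, Pairwise (Disjoint on B) ∧ (∀ i, #(B i) = c i) ∧ ∀ i, B i ⊆ A := by
  have hsigma : #(Σ i, (c i).out) = Cardinal.sum c := by simp only [mk_sigma, mk_out]
  obtain ⟨e⟩ := hsigma ▸ hc
  let emb : (Σ i, (c i).out) ↪ X := e.trans (Function.Embedding.subtype _)
  refine ⟨fun i ↦ Set.range (emb ∘ Sigma.mk i), ?_, fun i ↦ ?_, fun i ↦ ?_⟩
  · rintro i j hij
    refine Set.disjoint_left.mpr ?_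
    rintro _ ⟨s, rfl⟩ ⟨t, hts⟩
    exact hij (congrArg Sigma.fst (emb.injective hts)).symm
  · rw [mk_range_eq _ (emb.injective.comp sigma_mk_injective), mk_out]
  · rintro _ ⟨s, rfl⟩
    exact (e _).2

section sdim

variable {X : Type u}

theorem not_shatters_of_mk_eq_sdim (F : Set (X → Bool)) {A : Set X} (hA : #A = sdim F) :
    ¬ Shatters F A := by
  have hne : {δ : Cardinal.{u} | ∀ A : Set X, #A = δ → ¬ Shatters F A}.Nonempty :=
    ⟨Order.succ #X, fun A hA _ ↦ (Order.lt_succ #X).not_ge (hA ▸ mk_set_le A)⟩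
  exact csInf_mem hne A hA

theorem sdim_le_of_forall_not_shatters {F : Set (X → Bool)} {c : Cardinal.{u}}
    (h : ∀ A : Set X, #A = c → ¬ Shatters F A) : sdim F ≤ c :=
  csInf_le (OrderBot.bddBelow _) h

theorem sdim_iUnion_le_sum {ι : Type u} (F : ι → Set (X → Bool)) :
    sdim (⋃ i, F i) ≤ Cardinal.sum fun i ↦ sdim (F i) := by
  refine sdim_le_of_forall_not_shatters fun A hA hsh ↦ ?_
  obtain ⟨B, hBdisj, hBcard, hBA⟩ := exists_pairwiseDisjoint_subsets_of_sum_le hA.ge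
  obtain ⟨i, hi⟩ :=
    exists_shatters_of_shatters_iUnion hBdisj (hsh.mono (Set.iUnion_subset hBA))
  exact not_shatters_of_mk_eq_sdim (F i) (hBcard i) hi

end sdim

theorem stmt1_general (δ : Cardinal.{u}) (hδ : ℵ₀ ≤ δ)
    (K : Type u)
    (μ : Cardinal.{u}) (hμ : μ < (Cardinal.ord δ).cof)
    (ι : Type u) (hι : #ι = μ)
    (Fam : ι → Set (K → Bool)) (h : ∀ i, sdim (Fam i) < δ) :
    sdim (⋃ i, Fam i) < δ := by
  have hsup : (⨆ i, sdim (Fam i)) < δ := iSup_lt_of_lt_cof_ord (hι ▸ hμ) h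
  have hcard : #ι < δ := hι ▸ hμ.trans_le (Ordinal.cof_ord_le δ)
  calc sdim (⋃ i, Fam i) ≤ Cardinal.sum fun i ↦ sdim (Fam i) := sdim_iUnion_le_sum Fam
    _ ≤ #ι * ⨆ i, sdim (Fam i) := sum_le_mk_mul_iSup _
    _ < δ := mul_lt_of_lt hδ hcard hsup

/-- `S(δ,κ)`, the collection of families of string dimension `< δ`, is closed under
unions of fewer than `cf(δ)` many members. -/
theorem stmt1 (δ κ : Cardinal.{u}) (hδ : ℵ₀ ≤ δ) (hκ : ℵ₀ ≤ κ)
    (K : Type u) (hK : #K = κ)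
    (μ : Cardinal.{u}) (hμ : μ < (Cardinal.ord δ).cof)
    (ι : Type u) (hι : #ι = μ)
    (Fam : ι → Set (K → Bool)) (h : ∀ i, sdim (Fam i) < δ) :
    sdim (⋃ i, Fam i) < δ :=
  stmt1_general δ hδ K μ hμ ι hι Fam h
end

section
/- (Sauer–Shelah dichotomy) Let X be an infinite set and F ⊆ 2^X. Define f_F(n) = max{|F↾A| : A ⊆ X, |A| = n}. Then either f_F(n) = 2^n for all n < ω, or there is d < ω such that f_F(n) ≤ n^d for all n ≥ d. -/
universe u

/-- The number of distinct restrictions of elements of `F` to the finite set `A`. -/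
noncomputable def resCard {X : Type u} (F : Set (X → Bool)) (A : Finset X) : ℕ :=
  Nat.card {g : {x // x ∈ A} → Bool | ∃ f ∈ F, ∀ a : {x // x ∈ A}, f a = g a}

/-!
If some size `d` is never shattered, then no subset of any finite `A` of size `≥ d` is shattered
by the trace of `F` on `A`, so by Pajor's form of the Sauer–Shelah lemma that trace has at most
`∑_{k < d} C(|A|, k) ≤ |A|^d` members once `|A| ≥ d`.
-/

open Finset

theorem card_le_sum_range_choose_of_shatters_card_lt {α : Type*} [DecidableEq α]
    {𝒜 : Finset (Finset α)} {A : Finset α} {d : ℕ} (h𝒜 : ∀ s ∈ 𝒜, s ⊆ A)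
    (hd : ∀ s, 𝒜.Shatters s → #s < d) :
    #𝒜 ≤ ∑ k ∈ range d, (#A).choose k :=
  calc #𝒜 ≤ #𝒜.shatterer := card_le_card_shatterer 𝒜
    _ ≤ #((range d).biUnion (A.powersetCard ·)) := card_le_card fun s hs => by
        have hs := mem_shatterer.1 hs
        obtain ⟨t, ht, hst⟩ := hs.exists_superset
        exact mem_biUnion.2
          ⟨#s, mem_range.2 (hd s hs), mem_powersetCard.2 ⟨hst.trans (h𝒜 t ht), rfl⟩⟩
    _ ≤ ∑ k ∈ range d, #(A.powersetCard k) := card_biUnion_le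
    _ = ∑ k ∈ range d, (#A).choose k := by simp_rw [card_powersetCard]

theorem sum_range_choose_le_pow {n d : ℕ} (h : d ≤ n) :
    ∑ k ∈ range d, n.choose k ≤ n ^ d := by
  rcases d with _ | e
  · simp
  calc ∑ k ∈ range (e + 1), n.choose k ≤ ∑ k ∈ range (e + 1), n ^ e :=
        sum_le_sum fun k hk => (Nat.choose_le_pow n k).trans
          (Nat.pow_le_pow_right (by omega) (Nat.lt_succ_iff.1 (mem_range.1 hk)))
    _ = (e + 1) * n ^ e := by simp
    _ ≤ n * n ^ e := Nat.mul_le_mul_right _ h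
    _ = n ^ (e + 1) := (pow_succ' n e).symm

section Trace

variable {X : Type*} {F : Set (X → Bool)} {A s : Finset X}

/-- `F↾A`, each restriction encoded by the subset of `A` on which it is `true`. -/
noncomputable def trace (F : Set (X → Bool)) (A : Finset X) : Finset (Finset X) :=
  open Classical in {s ∈ A.powerset | ∃ f ∈ F, {x ∈ A | f x} = s}

theorem mem_trace : s ∈ trace F A ↔ ∃ f ∈ F, {x ∈ A | f x} = s := by
  simp only [trace, mem_filter, mem_powerset, and_iff_right_iff_imp]
  rintro ⟨f, -, rfl⟩
  exact filter_subset _ _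

theorem subset_of_mem_trace (hs : s ∈ trace F A) : s ⊆ A := by
  obtain ⟨f, -, rfl⟩ := mem_trace.1 hs
  exact filter_subset _ _

theorem resCard_eq_card_trace (F : Set (X → Bool)) (A : Finset X) :
    resCard F A = #(trace F A) := by
  set φ : ({x // x ∈ A} → Bool) → Finset X := fun g =>
    (univ.filter fun a => g a).map (Function.Embedding.subtype _)
  have hφ : φ.Injective := by
    intro g g' h
    funext a
    simpa [φ, Bool.coe_iff_coe] using Finset.ext_iff.1 h a
  have hrestrict : {g : {x // x ∈ A} → Bool | ∃ f ∈ F, ∀ a : {x // x ∈ A}, f a = g a} =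
      (fun f (a : {x // x ∈ A}) => f a) '' F := by
    ext g
    simp [funext_iff]
  have himage : φ '' ((fun f (a : {x // x ∈ A}) => f a) '' F) = trace F A := by
    ext s
    simp only [Set.image_image, Set.mem_image, mem_coe, mem_trace]
    refine exists_congr fun f => and_congr_right fun _ => Eq.congr_left ?_
    ext x
    simp [φ, and_comm]
  rw [resCard, hrestrict, ← Nat.card_image_of_injective hφ, himage, Nat.card_coe_set_eq,
    Set.ncard_coe_finset]

theorem resCard_eq_two_pow_of_shatters [DecidableEq X] (hs : (trace F A).Shatters s) :
    resCard F s = 2 ^ #s := by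
  obtain ⟨v, hv, hsv⟩ := hs.exists_superset
  have hsA : s ⊆ A := hsv.trans (subset_of_mem_trace hv)
  have htrace : trace F s = s.powerset := by
    ext t
    refine ⟨fun ht => mem_powerset.2 (subset_of_mem_trace ht), fun ht => ?_⟩
    obtain ⟨u, hu, rfl⟩ := hs (mem_powerset.1 ht)
    obtain ⟨f, hf, rfl⟩ := mem_trace.1 hu
    exact mem_trace.2 ⟨f, hf, by rw [inter_filter, inter_eq_left.2 hsA]⟩
  rw [resCard_eq_card_trace, htrace, card_powerset]

theorem exists_resCard_eq_two_pow_of_shatters [DecidableEq X] {d : ℕ}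
    (hs : (trace F A).Shatters s) (hd : d ≤ #s) :
    ∃ B : Finset X, #B = d ∧ resCard F B = 2 ^ d := by
  obtain ⟨t, hts, rfl⟩ := exists_subset_card_eq hd
  exact ⟨t, rfl, resCard_eq_two_pow_of_shatters (hs.mono_right hts)⟩

end Trace

theorem stmt7_general {X : Type u} (F : Set (X → Bool)) :
    (∀ n : ℕ, ∃ A : Finset X, A.card = n ∧ resCard F A = 2 ^ n) ∨
    (∃ d : ℕ, ∀ n, d ≤ n → ∀ A : Finset X, A.card = n → resCard F A ≤ n ^ d) := by
  classical
  refine or_iff_not_imp_left.2 fun h => ?_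
  push Not at h
  obtain ⟨d, hd⟩ := h
  refine ⟨d, fun n hn A hA => ?_⟩
  have hsmall : ∀ s, (trace F A).Shatters s → #s < d := fun s hs => by
    by_contra! hds
    obtain ⟨B, hB, hFB⟩ := exists_resCard_eq_two_pow_of_shatters hs hds
    exact hd B hB hFB
  calc resCard F A = #(trace F A) := resCard_eq_card_trace F A
    _ ≤ ∑ k ∈ range d, n.choose k :=
        hA ▸ card_le_sum_range_choose_of_shatters_card_lt (fun _ => subset_of_mem_trace) hsmall
    _ ≤ n ^ d := sum_range_choose_le_pow hn

/-- Sauer–Shelah dichotomy: for `F ⊆ 2^X` with `X` infinite, either the shatter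
function `f_F(n) = max {|F↾A| : |A| = n}` equals `2^n` for all `n`, or there is `d`
such that `f_F(n) ≤ n^d` for all `n ≥ d`. -/
theorem stmt7 {X : Type u} [Infinite X] (F : Set (X → Bool)) :
    (∀ n : ℕ, ∃ A : Finset X, A.card = n ∧ resCard F A = 2 ^ n) ∨
    (∃ d : ℕ, ∀ n, d ≤ n → ∀ A : Finset X, A.card = n → resCard F A ≤ n ^ d) :=
  stmt7_general F
end

section
/- For every strong limit cardinal κ there is a tree T ⊆ 2^{<κ} of height κ whose set of cofinal branches [T] has cardinality 2^κ, such that every subset A ⊆ [T] with |A| ≥ κ shatters subsets of κ of every cardinality δ with 2^δ < cf(κ). -/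
universe u

open Cardinal

/-- The canonical well-order of order type `κ`, realising the ordinals `< κ`. -/
abbrev OrdType (κ : Cardinal.{u}) : Type u := (Cardinal.ord κ).ToType

/-- A node of `2^{<κ}`: a length `a < κ` together with a binary string of that length. -/
def TreeNode (κ : Cardinal.{u}) : Type u :=
  Σ a : OrdType κ, (↥(Set.Iio a) → Bool)

/-- The initial segment of the branch `x : 2^κ` of length `a`. -/
def nodeOf {κ : Cardinal.{u}} (x : OrdType κ → Bool) (a : OrdType κ) : TreeNode κ :=
  ⟨a, fun b => x b.1⟩

/-- The restriction of a node to a smaller length `b`. -/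
def resNode {κ : Cardinal.{u}} (p : TreeNode κ) (b : OrdType κ) (hb : b ≤ p.1) :
    TreeNode κ :=
  ⟨b, fun c => p.2 ⟨c.1, lt_of_lt_of_le c.2 hb⟩⟩

/-- The cofinal branches of a tree `T ⊆ 2^{<κ}`. -/
def Branches {κ : Cardinal.{u}} (T : Set (TreeNode κ)) : Set (OrdType κ → Bool) :=
  {x | ∀ a : OrdType κ, nodeOf x a ∈ T}

/-!
Place every requirement "the value at this coordinate is `f (x ↾ a)`" at its own coordinate above
`a`. A strong limit `κ` has only `κ` such requirements, so this can be done injectively while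
leaving `κ` coordinates unconstrained; the tree of nodes obeying all requirements below their
length then has `2 ^ κ` branches. If `A` has at least `κ` branches, pick branches `x g`, one for
each `g : δ → 2`. As `(2 ^ δ) ^ 2 < cf κ`, they are already pairwise distinct below some level `a`,
so `x g ↾ a` determines `g`; the requirement reading bit `i` of `g` off `x g ↾ a` sits at some
coordinate `s i`, where every `x g` takes the value `g i`. Hence `A` shatters `{s i | i < δ}`.
-/
open Set Function

section
variable {κ : Cardinal.{u}}

theorem mk_Iio_ordType_lt (a : OrdType κ) : #(Iio a) < κ := by
  simpa using mk_Iio_lt a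

theorem nonempty_Ici_diff (hκ : ℵ₀ ≤ κ) (a : OrdType κ) {s : Set (OrdType κ)} (hs : #s < κ) :
    (Ici a \ s).Nonempty := by
  by_contra h
  have hcover : (univ : Set (OrdType κ)) ⊆ Iio a ∪ s := fun x _ => by
    by_contra hx
    simp only [mem_union, mem_Iio, not_or, not_lt] at hx
    exact h ⟨x, hx⟩
  have hle : κ ≤ #(Iio a) + #s := by
    simpa using (mk_le_mk_of_subset hcover).trans (mk_union_le _ _)
  exact hle.not_gt (add_lt_of_lt hκ (mk_Iio_ordType_lt a) hs)

theorem exists_restrict_injective (hκ : ℵ₀ ≤ κ) {ι : Type u} {β : Type*}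
    (x : ι → OrdType κ → β) (hx : Injective x) (hι : #ι < (ord κ).cof) :
    ∃ a : OrdType κ, Injective fun i (b : Iio a) => x i b := by
  have hsep (p : {p : ι × ι // x p.1 ≠ x p.2}) : ∃ d, x p.1.1 d ≠ x p.1.2 d :=
    Function.ne_iff.mp p.2
  choose d hd using hsep
  have hcof : ℵ₀ ≤ (ord κ).cof :=
    Ordinal.aleph0_le_cof_iff.2 (Ordinal.one_lt_cof_iff.2 (isSuccLimit_ord hκ))
  have hsmall : #(range d) < Order.cof (OrdType κ) := by
    rw [Ordinal.cof_toType]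
    calc #(range d) ≤ #(ι × ι) := mk_range_le.trans (mk_subtype_le _)
      _ = #ι * #ι := by simp
      _ < _ := mul_lt_of_lt hcof hι hι
  obtain ⟨a, ha⟩ := not_isCofinal_iff.mp fun hc => (Order.cof_le hc).not_gt hsmall
  refine ⟨a, fun i j hij => by_contra fun hne => ?_⟩
  exact hd ⟨(i, j), hx.ne hne⟩ (congrFun hij ⟨_, ha _ ⟨_, rfl⟩⟩)

theorem exists_injective_forall_mem {ι α : Type u} (g : ι → Set α)
    (hg : ∀ i (s : Set α), #s < #ι → (g i \ s).Nonempty) :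
    ∃ f : ι → α, Injective f ∧ ∀ i, f i ∈ g i := by
  obtain ⟨w⟩ : Nonempty (OrdType #ι ≃ ι) := Cardinal.eq.mp (mk_ord_toType _)
  have hfresh (a : OrdType #ι) (prev : ∀ b, b < a → α) :
      (g (w a) \ range fun b : Iio a => prev b.1 b.2).Nonempty :=
    hg _ _ (mk_range_le.trans_lt (mk_Iio_ordType_lt a))
  let f : OrdType #ι → α := WellFoundedLT.fix fun a prev => (hfresh a prev).some
  have hf (a) : f a ∈ g (w a) \ range fun b : Iio a => f b.1 := by
    rw [show f a = _ from WellFoundedLT.fix_eq _ a]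
    exact (hfresh a fun b _ => f b).some_mem
  have hinj : Injective f := fun a b heq => by
    by_contra hne
    rcases lt_or_gt_of_ne hne with h | h
    · exact (hf b).2 ⟨⟨a, h⟩, heq⟩
    · exact (hf a).2 ⟨⟨b, h⟩, heq.symm⟩
  exact ⟨f ∘ w.symm, hinj.comp w.symm.injective, fun i => by simpa using (hf (w.symm i)).1⟩

/-- `⟨a, f⟩` is the requirement that a branch `x` take the value `f (x ↾ a)` at the coordinate
a coding assigns to it. -/
abbrev Code (κ : Cardinal.{u}) : Type u :=
  Σ a : OrdType κ, ((Iio a → Bool) → Bool)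

theorem mk_code_le (hκ : κ.IsStrongLimit) : #(Code κ) ≤ κ := by
  rw [mk_sigma]
  calc sum (fun a : OrdType κ => #((Iio a → Bool) → Bool)) ≤ sum fun _ : OrdType κ => κ :=
        sum_le_sum _ _ fun a => by
          simpa using (hκ.isStrongPrelimit (hκ.isStrongPrelimit (mk_Iio_ordType_lt a))).le
    _ = κ := by rw [sum_const', mk_ord_toType, mul_eq_self hκ.aleph0_le]

structure Coding (κ : Cardinal.{u}) where
  pos : Code κ → OrdType κ
  injective : Injective pos
  fst_le_pos : ∀ c, c.1 ≤ pos c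
  le_mk_compl_range : κ ≤ #((range pos)ᶜ : Set (OrdType κ))

theorem Coding.nonempty (hκ : κ.IsStrongLimit) : Nonempty (Coding κ) := by
  -- the extra `κ` indices reserve `κ` coordinates outside the range of `pos`
  let level : Code κ ⊕ OrdType κ → OrdType κ := Sum.elim Sigma.fst id
  have hcard : #(Code κ ⊕ OrdType κ) = κ := by
    rw [mk_sum, lift_id, lift_id, mk_ord_toType, add_eq_right hκ.aleph0_le (mk_code_le hκ)]
  obtain ⟨f, hf, hlevel⟩ := exists_injective_forall_mem (fun i => Ici (level i))
    fun i s hs => nonempty_Ici_diff hκ.aleph0_le _ (hs.trans_eq hcard)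
  refine ⟨⟨f ∘ Sum.inl, hf.comp Sum.inl_injective, fun c => hlevel (Sum.inl c), ?_⟩⟩
  calc κ = #(range (f ∘ Sum.inr)) := by
        rw [mk_range_eq _ (hf.comp Sum.inr_injective), mk_ord_toType]
    _ ≤ _ := mk_le_mk_of_subset ?_
  rintro _ ⟨a, rfl⟩ ⟨c, hc⟩
  exact Sum.inl_ne_inr (hf hc)

namespace Coding
variable (C : Coding κ)

def tree : Set (TreeNode κ) :=
  {q | ∀ c (h : C.pos c < q.1),
    q.2 ⟨C.pos c, h⟩ = c.2 fun b => q.2 ⟨b.1, (b.2.trans_le (C.fst_le_pos c)).trans h⟩}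

theorem resNode_mem_tree {q : TreeNode κ} (hq : q ∈ C.tree) (b : OrdType κ) (hb : b ≤ q.1) :
    resNode q b hb ∈ C.tree :=
  fun c h => hq c (h.trans_le hb)

theorem mem_branches_tree [NoMaxOrder (OrdType κ)] {x : OrdType κ → Bool} :
    x ∈ Branches C.tree ↔ ∀ c, x (C.pos c) = c.2 fun b => x b := by
  refine ⟨fun hx c => ?_, fun hx _ c _ => hx c⟩
  obtain ⟨a, ha⟩ := exists_gt (C.pos c)
  exact hx a c ha

open Classical in
noncomputable def branch (v : OrdType κ → Bool) : OrdType κ → Bool :=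
  WellFoundedLT.fix fun a prev =>
    if h : a ∈ range C.pos then
      h.choose.2 fun b => prev b.1 (b.2.trans_le ((C.fst_le_pos _).trans_eq h.choose_spec))
    else v a

open Classical in
theorem branch_eq (v : OrdType κ → Bool) (a : OrdType κ) :
    C.branch v a = if h : a ∈ range C.pos then h.choose.2 fun b => C.branch v b else v a :=
  WellFoundedLT.fix_eq _ a

theorem branch_apply_pos (v : OrdType κ → Bool) (c : Code κ) :
    C.branch v (C.pos c) = c.2 fun b => C.branch v b := by
  have h : C.pos c ∈ range C.pos := ⟨c, rfl⟩
  rw [branch_eq, dif_pos h, C.injective h.choose_spec]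

theorem branch_apply_of_notMem_range (v : OrdType κ → Bool) {a : OrdType κ}
    (h : a ∉ range C.pos) :
    C.branch v a = v a := by
  rw [branch_eq, dif_neg h]

theorem branch_mem_branches (v : OrdType κ → Bool) : C.branch v ∈ Branches C.tree :=
  fun _ c _ => C.branch_apply_pos v c

theorem exists_mem_tree (a : OrdType κ) : ∃ t, (⟨a, t⟩ : TreeNode κ) ∈ C.tree :=
  ⟨_, C.branch_mem_branches (fun _ => false) a⟩

theorem mk_branches_tree : #(Branches C.tree) = 2 ^ κ := by
  refine le_antisymm ((mk_set_le _).trans_eq (by simp)) ?_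
  set free : Set (OrdType κ) := (range C.pos)ᶜ
  have hsurj : Surjective fun (x : Branches C.tree) (a : free) => x.1 a := by
    classical
    intro u
    refine ⟨⟨_, C.branch_mem_branches fun a => if h : a ∈ free then u ⟨a, h⟩ else false⟩,
      funext fun a => ?_⟩
    simp only [C.branch_apply_of_notMem_range _ a.2, dif_pos a.2]
  calc 2 ^ κ ≤ 2 ^ #free := power_le_power_left two_ne_zero C.le_mk_compl_range
    _ = #(free → Bool) := by simp
    _ ≤ _ := mk_le_of_surjective hsurj

theorem shatters_of_restrict_injective [NoMaxOrder (OrdType κ)] {ι : Type u}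
    {A : Set (OrdType κ → Bool)} (hA : A ⊆ Branches C.tree) (x : (ι → Bool) → OrdType κ → Bool)
    (hxA : ∀ g, x g ∈ A) {a : OrdType κ} (hx : Injective fun g (b : Iio a) => x g b) :
    ∃ S : Set (OrdType κ), #S = #ι ∧ Shatters A S := by
  -- the requirement `code i` reads bit `i` of `g` off `x g ↾ a`
  let code (i : ι) : Code κ := ⟨a, fun w => invFun (fun g (b : Iio a) => x g b) w i⟩
  have hcode (g : ι → Bool) (i : ι) : x g (C.pos (code i)) = g i := by
    rw [C.mem_branches_tree.mp (hA (hxA g))]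
    exact congrFun (leftInverse_invFun hx g) i
  have hinj : Injective (C.pos ∘ code) := fun i j hij => by
    classical
    have hi := hcode (fun k => decide (k = i)) i
    rw [comp_apply, comp_apply] at hij
    rw [hij, hcode] at hi
    exact (by simpa using hi : j = i).symm
  refine ⟨range (C.pos ∘ code), mk_range_eq _ hinj, fun t => ⟨x (t ∘ C.pos ∘ code), hxA _, ?_⟩⟩
  rintro _ ⟨i, rfl⟩
  exact hcode _ i

theorem exists_shatters (hκ : ℵ₀ ≤ κ) {A : Set (OrdType κ → Bool)} (hA : A ⊆ Branches C.tree)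
    (hκA : κ ≤ #A) {δ : Cardinal.{u}} (hδ : 2 ^ δ < (ord κ).cof) :
    ∃ S : Set (OrdType κ), #S = δ ∧ Shatters A S := by
  have := noMaxOrder hκ
  have hpow : #(δ.out → Bool) = 2 ^ δ := by simp
  obtain ⟨e⟩ : Nonempty ((δ.out → Bool) ↪ A) := by
    rw [← le_def, hpow]
    exact (hδ.le.trans (Ordinal.cof_ord_le κ)).trans hκA
  obtain ⟨a, ha⟩ := exists_restrict_injective hκ (fun g => (e g).1)
    (Subtype.val_injective.comp e.injective) (hpow ▸ hδ)
  obtain ⟨S, hS, hAS⟩ := C.shatters_of_restrict_injective hA _ (fun g => (e g).2) ha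
  exact ⟨S, hS.trans (mk_out δ), hAS⟩

end Coding

end

/-- For every strong limit `κ` there is a tree `T ⊆ 2^{<κ}` (closed under restriction)
of height `κ` with `2^κ` cofinal branches, such that every `A ⊆ [T]` with `|A| ≥ κ`
shatters subsets of `κ` of every cardinality `δ` with `2^δ < cf(κ)`. -/
theorem stmt15 (κ : Cardinal.{u}) (hκ : κ.IsStrongLimit) :
    ∃ T : Set (TreeNode κ),
      (∀ p ∈ T, ∀ (b : OrdType κ) (hb : b ≤ p.1), resNode p b hb ∈ T) ∧
      (∀ a : OrdType κ, ∃ t : ↥(Set.Iio a) → Bool, (⟨a, t⟩ : TreeNode κ) ∈ T) ∧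
      #(Branches T) = 2 ^ κ ∧
      (∀ A : Set (OrdType κ → Bool), A ⊆ Branches T → κ ≤ #A →
        ∀ δ : Cardinal.{u}, 2 ^ δ < (Cardinal.ord κ).cof →
          ∃ S : Set (OrdType κ), #S = δ ∧ Shatters A S) := by
  obtain ⟨C⟩ := Coding.nonempty hκ
  exact ⟨C.tree, fun _ hq => C.resNode_mem_tree hq, C.exists_mem_tree, C.mk_branches_tree,
    fun _ hA hκA _ hδ => C.exists_shatters hκ.aleph0_le hA hκA hδ⟩
end
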